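/- Let 0 < ϱ < 1, and let Φ, Φ̃, w : [0,∞) → ℝ be measurable with ϱ ≤ e^{Φ(y)} ≤ ϱ⁻¹, ϱ ≤ e^{Φ̃(y)} ≤ ϱ⁻¹ and w(y) ≥ ϱ for ν-a.e. y, and ∫ w(y)y² dν(y) < ∞. Then | inf_{u≥0} G̃(u,w,Φ) − inf_{u≥0} G̃(u,w,Φ̃) | ≤ 2∫ |e^{Φ(y)} − e^{Φ̃(y)}| λ dν(y) ≤ 2ϱ⁻¹ ∫ |Φ(y) − Φ̃(y)| λ dν(y). -/

import Mathlib

open MeasureTheory Real Set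

/-!
Only the first summand of `G̃(u,w,Φ)` depends on `Φ`, and for `u, y ≥ 0` its factor
`((1 − uy)⁺)² − 1` lies in `[−1, 0]`. Hence `u ↦ G̃(u,w,Φ)` and `u ↦ G̃(u,w,Φ̃)` are uniformly
within `∫ |e^Φ − e^Φ̃| λ dν` of each other on `[0,∞)`, and so are their infima. The second
inequality is the Lipschitz bound `|e^a − e^c| ≤ ϱ⁻¹ |a − c|` for `e^a, e^c ≤ ϱ⁻¹`.
-/

/-- `G̃(u,w,Φ) := ∫ [e^{Φ(y)}·(((1−uy)⁺)² − 1) + w(y)·((1−uy)⁻)²] λ dν(y) + 2u(b+λb_Y)`. -/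
noncomputable def Gt (ν : Measure ℝ) (lam b : ℝ) (w Φ : ℝ → ℝ) (u : ℝ) : ℝ :=
  lam * ∫ y, (Real.exp (Φ y) * ((max (1 - u * y) 0) ^ 2 - 1)
      + w y * (max (-(1 - u * y)) 0) ^ 2) ∂ν
    + 2 * u * (b + lam * ∫ y, y ∂ν)

section Infimum

variable {α : Type*} {f g : α → ℝ} {S : Set α} {C : ℝ}

lemma sInf_image_le_sInf_image_add (hS : S.Nonempty) (hf : BddBelow (f '' S))
    (h : ∀ x ∈ S, f x ≤ g x + C) : sInf (f '' S) ≤ sInf (g '' S) + C := by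
  suffices sInf (f '' S) - C ≤ sInf (g '' S) by linarith
  refine le_csInf (hS.image g) ?_
  rintro _ ⟨x, hx, rfl⟩
  linarith [csInf_le hf ⟨x, hx, rfl⟩, h x hx]

lemma BddBelow.image_of_le_add (hf : BddBelow (f '' S)) (h : ∀ x ∈ S, f x ≤ g x + C) :
    BddBelow (g '' S) := by
  obtain ⟨m, hm⟩ := hf
  refine ⟨m - C, ?_⟩
  rintro _ ⟨x, hx, rfl⟩
  linarith [hm ⟨x, hx, rfl⟩, h x hx]

/-- `f` and `g` are bounded below together, and otherwise both real infima are the junk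
value `0`. -/
lemma abs_sInf_image_sub_sInf_image_le (hS : S.Nonempty) (h : ∀ x ∈ S, |f x - g x| ≤ C) :
    |sInf (f '' S) - sInf (g '' S)| ≤ C := by
  have hfg : ∀ x ∈ S, f x ≤ g x + C := fun x hx => by linarith [(abs_le.mp (h x hx)).2]
  have hgf : ∀ x ∈ S, g x ≤ f x + C := fun x hx => by linarith [(abs_le.mp (h x hx)).1]
  by_cases hf : BddBelow (f '' S)
  · have hg := hf.image_of_le_add hfg
    exact abs_sub_le_iff.mpr
      ⟨by linarith [sInf_image_le_sInf_image_add hS hf hfg],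
       by linarith [sInf_image_le_sInf_image_add hS hg hgf]⟩
  · have hg : ¬BddBelow (g '' S) := fun hg => hf (hg.image_of_le_add hgf)
    obtain ⟨x, hx⟩ := hS
    rw [Real.sInf_of_not_bddBelow hf, Real.sInf_of_not_bddBelow hg, sub_zero, abs_zero]
    exact (abs_nonneg _).trans (h x hx)

end Infimum

lemma exp_sub_exp_le_of_le {a c M : ℝ} (ha : exp a ≤ M) (hca : c ≤ a) :
    exp a - exp c ≤ M * (a - c) := by
  have h : exp a * (c - a + 1) ≤ exp c := by
    calc exp a * (c - a + 1) ≤ exp a * exp (c - a) :=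
          mul_le_mul_of_nonneg_left (add_one_le_exp _) (exp_pos a).le
      _ = exp c := by rw [← exp_add, add_sub_cancel]
  nlinarith [exp_pos a]

lemma abs_exp_sub_exp_le {a c M : ℝ} (ha : exp a ≤ M) (hc : exp c ≤ M) :
    |exp a - exp c| ≤ M * |a - c| := by
  rcases le_total c a with hca | hac
  · rw [abs_of_nonneg (sub_nonneg.mpr (exp_le_exp.mpr hca)), abs_of_nonneg (sub_nonneg.mpr hca)]
    exact exp_sub_exp_le_of_le ha hca
  · rw [abs_sub_comm, abs_sub_comm a, abs_of_nonneg (sub_nonneg.mpr (exp_le_exp.mpr hac)),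
      abs_of_nonneg (sub_nonneg.mpr hac)]
    exact exp_sub_exp_le_of_le hc hac

lemma abs_le_neg_log_of_exp_mem {a ϱ : ℝ} (hϱ : 0 < ϱ) (h₁ : ϱ ≤ exp a) (h₂ : exp a ≤ ϱ⁻¹) :
    |a| ≤ -log ϱ := by
  rw [abs_le, neg_neg, ← log_inv]
  exact ⟨(log_le_iff_le_exp hϱ).mpr h₁, (le_log_iff_exp_le (inv_pos.mpr hϱ)).mpr h₂⟩

section Kernel

variable {u y : ℝ}

lemma abs_max_one_sub_mul_sq_sub_one_le (hu : 0 ≤ u) (hy : 0 ≤ y) :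
    |max (1 - u * y) 0 ^ 2 - 1| ≤ 1 := by
  have h₀ : 0 ≤ max (1 - u * y) 0 := le_max_right _ _
  have h₁ : max (1 - u * y) 0 ≤ 1 := max_le (by nlinarith) zero_le_one
  rw [abs_le]
  constructor <;> nlinarith

lemma max_neg_one_sub_mul_le (hu : 0 ≤ u) (hy : 0 ≤ y) : max (-(1 - u * y)) 0 ≤ u * y :=
  max_le (by linarith) (mul_nonneg hu hy)

end Kernel

section Integrability

variable {ν : Measure ℝ} {u : ℝ}

lemma integrable_exp_mul_max_one_sub_mul_sq_sub_one (hν0 : ∀ᵐ y ∂ν, 0 ≤ y) (hu : 0 ≤ u)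
    {Φ : ℝ → ℝ} (hΦ : Integrable (fun y => exp (Φ y)) ν) :
    Integrable (fun y => exp (Φ y) * (max (1 - u * y) 0 ^ 2 - 1)) ν := by
  refine hΦ.mul_bdd (c := 1) (by fun_prop) ?_
  filter_upwards [hν0] with y hy
  exact abs_max_one_sub_mul_sq_sub_one_le hu hy

lemma integrable_mul_max_neg_one_sub_mul_sq (hν0 : ∀ᵐ y ∂ν, 0 ≤ y) (hu : 0 ≤ u)
    {w : ℝ → ℝ} (hwm : Measurable w) (hwint : Integrable (fun y => w y * y ^ 2) ν) :
    Integrable (fun y => w y * max (-(1 - u * y)) 0 ^ 2) ν := by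
  refine (hwint.norm.const_mul (u ^ 2)).mono' (by fun_prop) ?_
  filter_upwards [hν0] with y hy
  have h := pow_le_pow_left₀ (le_max_right _ _) (max_neg_one_sub_mul_le hu hy) 2
  simp only [Real.norm_eq_abs, abs_mul, abs_pow, sq_abs]
  nlinarith [abs_nonneg (w y)]

end Integrability

section GtDifference

variable {ν : Measure ℝ} {lam b u : ℝ} {w Φ Φ' : ℝ → ℝ}

lemma Gt_sub_Gt (hν0 : ∀ᵐ y ∂ν, 0 ≤ y) (hu : 0 ≤ u)
    (hΦ : Integrable (fun y => exp (Φ y)) ν) (hΦ' : Integrable (fun y => exp (Φ' y)) ν)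
    (hwm : Measurable w) (hwint : Integrable (fun y => w y * y ^ 2) ν) :
    Gt ν lam b w Φ u - Gt ν lam b w Φ' u
      = lam * ∫ y, (exp (Φ y) - exp (Φ' y)) * (max (1 - u * y) 0 ^ 2 - 1) ∂ν := by
  have hw := integrable_mul_max_neg_one_sub_mul_sq hν0 hu hwm hwint
  have h₁ := (integrable_exp_mul_max_one_sub_mul_sq_sub_one hν0 hu hΦ).add hw
  have h₂ := (integrable_exp_mul_max_one_sub_mul_sq_sub_one hν0 hu hΦ').add hw
  rw [Gt, Gt, add_sub_add_right_eq_sub, ← mul_sub, ← integral_sub (by exact h₁) (by exact h₂)]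
  congr 2 with y
  ring

lemma abs_Gt_sub_Gt_le (hν0 : ∀ᵐ y ∂ν, 0 ≤ y) (hlam : 0 ≤ lam) (hu : 0 ≤ u)
    (hΦ : Integrable (fun y => exp (Φ y)) ν) (hΦ' : Integrable (fun y => exp (Φ' y)) ν)
    (hwm : Measurable w) (hwint : Integrable (fun y => w y * y ^ 2) ν) :
    |Gt ν lam b w Φ u - Gt ν lam b w Φ' u| ≤ lam * ∫ y, |exp (Φ y) - exp (Φ' y)| ∂ν := by
  rw [Gt_sub_Gt hν0 hu hΦ hΦ' hwm hwint, abs_mul, abs_of_nonneg hlam]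
  gcongr
  refine abs_integral_le_integral_abs.trans <|
    integral_mono_of_nonneg (.of_forall fun y => abs_nonneg _) (hΦ.sub hΦ').abs ?_
  filter_upwards [hν0] with y hy
  rw [abs_mul]
  exact mul_le_of_le_one_right (abs_nonneg _) (abs_max_one_sub_mul_sq_sub_one_le hu hy)

end GtDifference

section Bounded

variable {ν : Measure ℝ} {ϱ M : ℝ} {Φ Φ' : ℝ → ℝ}

lemma integrable_exp_of_ae_exp_le [IsFiniteMeasure ν] (hΦm : Measurable Φ)
    (hΦ : ∀ᵐ y ∂ν, exp (Φ y) ≤ M) : Integrable (fun y => exp (Φ y)) ν :=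
  .of_bound (by fun_prop) M <| by
    filter_upwards [hΦ] with y hy
    rwa [Real.norm_of_nonneg (exp_pos _).le]

lemma integrable_sub_of_ae_exp_mem [IsFiniteMeasure ν] (hϱ : 0 < ϱ)
    (hΦm : Measurable Φ) (hΦ'm : Measurable Φ')
    (hΦ : ∀ᵐ y ∂ν, ϱ ≤ exp (Φ y) ∧ exp (Φ y) ≤ ϱ⁻¹)
    (hΦ' : ∀ᵐ y ∂ν, ϱ ≤ exp (Φ' y) ∧ exp (Φ' y) ≤ ϱ⁻¹) :
    Integrable (fun y => Φ y - Φ' y) ν :=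
  .of_bound (by fun_prop) (-log ϱ + -log ϱ) <| by
    filter_upwards [hΦ, hΦ'] with y h h'
    exact (norm_sub_le _ _).trans (add_le_add (abs_le_neg_log_of_exp_mem hϱ h.1 h.2)
      (abs_le_neg_log_of_exp_mem hϱ h'.1 h'.2))

lemma integral_abs_exp_sub_exp_le (hΦ : ∀ᵐ y ∂ν, exp (Φ y) ≤ M)
    (hΦ' : ∀ᵐ y ∂ν, exp (Φ' y) ≤ M) (hint : Integrable (fun y => Φ y - Φ' y) ν) :
    ∫ y, |exp (Φ y) - exp (Φ' y)| ∂ν ≤ M * ∫ y, |Φ y - Φ' y| ∂ν := by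
  rw [← integral_const_mul]
  refine integral_mono_of_nonneg (.of_forall fun y => abs_nonneg _) (hint.abs.const_mul _) ?_
  filter_upwards [hΦ, hΦ'] with y h h'
  exact abs_exp_sub_exp_le h h'

end Bounded

theorem stmt10_general (ν : Measure ℝ) [IsProbabilityMeasure ν]
    (hν0 : ∀ᵐ y ∂ν, 0 ≤ y)
    (lam b : ℝ) (hlam : 0 < lam)
    (ϱ : ℝ) (hϱ0 : 0 < ϱ)
    (Φ Φ' w : ℝ → ℝ) (hΦm : Measurable Φ) (hΦ'm : Measurable Φ') (hwm : Measurable w)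
    (hΦ : ∀ᵐ y ∂ν, ϱ ≤ Real.exp (Φ y) ∧ Real.exp (Φ y) ≤ ϱ⁻¹)
    (hΦ' : ∀ᵐ y ∂ν, ϱ ≤ Real.exp (Φ' y) ∧ Real.exp (Φ' y) ≤ ϱ⁻¹)
    (hwint : Integrable (fun y => w y * y ^ 2) ν) :
    |sInf (Gt ν lam b w Φ '' Set.Ici 0) - sInf (Gt ν lam b w Φ' '' Set.Ici 0)|
        ≤ 2 * (lam * ∫ y, |Real.exp (Φ y) - Real.exp (Φ' y)| ∂ν) ∧
    2 * (lam * ∫ y, |Real.exp (Φ y) - Real.exp (Φ' y)| ∂ν)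
        ≤ 2 * ϱ⁻¹ * (lam * ∫ y, |Φ y - Φ' y| ∂ν) := by
  have hΦ_le : ∀ᵐ y ∂ν, exp (Φ y) ≤ ϱ⁻¹ := hΦ.mono fun _ h => h.2
  have hΦ'_le : ∀ᵐ y ∂ν, exp (Φ' y) ≤ ϱ⁻¹ := hΦ'.mono fun _ h => h.2
  have hexpΦ := integrable_exp_of_ae_exp_le hΦm hΦ_le
  have hexpΦ' := integrable_exp_of_ae_exp_le hΦ'm hΦ'_le
  have hC : 0 ≤ lam * ∫ y, |exp (Φ y) - exp (Φ' y)| ∂ν :=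
    mul_nonneg hlam.le (integral_nonneg fun _ => abs_nonneg _)
  constructor
  · refine (abs_sInf_image_sub_sInf_image_le nonempty_Ici fun u hu => ?_).trans
      (le_mul_of_one_le_left hC one_le_two)
    exact abs_Gt_sub_Gt_le hν0 hlam.le hu hexpΦ hexpΦ' hwm hwint
  · have h := integral_abs_exp_sub_exp_le hΦ_le hΦ'_le
      (integrable_sub_of_ae_exp_mem hϱ0 hΦm hΦ'm hΦ hΦ')
    rw [mul_assoc 2, mul_left_comm ϱ⁻¹]
    gcongr

/-- under the stated bounds on `Φ, Φ̃, w`,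
`|inf_{u≥0} G̃(u,w,Φ) − inf_{u≥0} G̃(u,w,Φ̃)| ≤ 2∫|e^{Φ} − e^{Φ̃}| λ dν
  ≤ 2ϱ⁻¹∫|Φ − Φ̃| λ dν`. -/
theorem stmt10 (ν : Measure ℝ) [IsProbabilityMeasure ν]
    (hν0 : ∀ᵐ y ∂ν, 0 ≤ y)
    (lam b : ℝ) (hlam : 0 < lam) (hb : 0 < b)
    (hy : Integrable (fun y => y) ν)
    (hy2 : Integrable (fun y => y ^ 2) ν)
    (hbY : 0 < ∫ y, y ∂ν) (hσY : 0 < ∫ y, y ^ 2 ∂ν)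
    (ϱ : ℝ) (hϱ0 : 0 < ϱ) (hϱ1 : ϱ < 1)
    (Φ Φ' w : ℝ → ℝ) (hΦm : Measurable Φ) (hΦ'm : Measurable Φ') (hwm : Measurable w)
    (hΦ : ∀ᵐ y ∂ν, ϱ ≤ Real.exp (Φ y) ∧ Real.exp (Φ y) ≤ ϱ⁻¹)
    (hΦ' : ∀ᵐ y ∂ν, ϱ ≤ Real.exp (Φ' y) ∧ Real.exp (Φ' y) ≤ ϱ⁻¹)
    (hw : ∀ᵐ y ∂ν, ϱ ≤ w y)
    (hwint : Integrable (fun y => w y * y ^ 2) ν) :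
    |sInf (Gt ν lam b w Φ '' Set.Ici 0) - sInf (Gt ν lam b w Φ' '' Set.Ici 0)|
        ≤ 2 * (lam * ∫ y, |Real.exp (Φ y) - Real.exp (Φ' y)| ∂ν) ∧
    2 * (lam * ∫ y, |Real.exp (Φ y) - Real.exp (Φ' y)| ∂ν)
        ≤ 2 * ϱ⁻¹ * (lam * ∫ y, |Φ y - Φ' y| ∂ν) :=
  stmt10_general ν hν0 lam b hlam ϱ hϱ0 Φ Φ' w hΦm hΦ'm hwm hΦ hΦ' hwint
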